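/- arXiv:math/0309085 — 10 statements merged into one kernel-verified Lean document; each statement's English description precedes it below -/
import Mathlib

section
/- Let E be a finite-dimensional real inner product space, F a real vector space, and d : F → E, L : E → E linear maps such that L is symmetric (⟨L u, v⟩ = ⟨u, L v⟩ for all u, v ∈ E) and L ∘ d = 0. Then range(d) and range(L) are orthogonal to each other, both are orthogonal to the subspace (range d)ᗮ ⊓ ker L, and E is the internal direct sum of the three subspaces range(d), range(L), and (range d)ᗮ ⊓ ker L. -/
/-! For symmetric `L` we have `(range L)ᗮ = ker L`, so `L ∘ d = 0` says `range d ⟂ range L`, and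
`(range d)ᗮ ⊓ ker L` is exactly `(range d ⊔ range L)ᗮ`. Two orthogonal subspaces together with
the orthogonal complement of their sum decompose a finite-dimensional space. -/

open RealInnerProductSpace

namespace Submodule

variable {𝕜 E : Type*} [RCLike 𝕜] [NormedAddCommGroup E] [InnerProductSpace 𝕜 E]

theorem isOrtho_orthogonal_sup_left (A B : Submodule 𝕜 E) : A ⟂ (A ⊔ B)ᗮ :=
  (isOrtho_orthogonal_right _).mono_left le_sup_left

theorem isOrtho_orthogonal_sup_right (A B : Submodule 𝕜 E) : B ⟂ (A ⊔ B)ᗮ :=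
  (isOrtho_orthogonal_right _).mono_left le_sup_right

theorem IsOrtho.isInternal_orthogonal_sup [FiniteDimensional 𝕜 E] {A B : Submodule 𝕜 E}
    (h : A ⟂ B) : DirectSum.IsInternal ![A, B, (A ⊔ B)ᗮ] := by
  set V := ![A, B, (A ⊔ B)ᗮ]
  have hAC := isOrtho_orthogonal_sup_left A B
  have hBC := isOrtho_orthogonal_sup_right A B
  have hV : OrthogonalFamily 𝕜 (fun i => V i) fun i => (V i).subtypeₗᵢ := by
    refine OrthogonalFamily.of_pairwise fun i j hij => ?_
    fin_cases i <;> fin_cases j <;> first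
      | exact absurd rfl hij
      | assumption
      | exact IsOrtho.symm ‹_›
  rw [hV.isInternal_iff, eq_bot_iff]
  have hsup : A ⊔ B ≤ iSup V := sup_le (le_iSup V 0) (le_iSup V 1)
  calc (iSup V)ᗮ ≤ (A ⊔ B)ᗮ ⊓ (A ⊔ B)ᗮᗮ :=
        le_inf (orthogonal_le hsup) (orthogonal_le (le_iSup V 2))
    _ = ⊥ := inf_orthogonal_eq_bot _

end Submodule

/-- Finite-dimensional algebraic core of the Hodge decomposition (2.7) of
Branson–Gover: if `L` is symmetric and `L ∘ d = 0`, then `range d`, `range L`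
and `(range d)ᗮ ⊓ ker L` are pairwise orthogonal and give an internal direct
sum decomposition of `E`. -/
theorem stmt_0
    {E F : Type*} [NormedAddCommGroup E] [InnerProductSpace ℝ E]
    [FiniteDimensional ℝ E] [AddCommGroup F] [Module ℝ F]
    (d : F →ₗ[ℝ] E) (L : E →ₗ[ℝ] E)
    (hsym : ∀ u v : E, ⟪L u, v⟫ = ⟪u, L v⟫)
    (hLd : L ∘ₗ d = 0) :
    (∀ u ∈ LinearMap.range d, ∀ v ∈ LinearMap.range L, ⟪u, v⟫ = 0) ∧
    (∀ u ∈ LinearMap.range d,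
        ∀ v ∈ (LinearMap.range d)ᗮ ⊓ LinearMap.ker L, ⟪u, v⟫ = 0) ∧
    (∀ u ∈ LinearMap.range L,
        ∀ v ∈ (LinearMap.range d)ᗮ ⊓ LinearMap.ker L, ⟪u, v⟫ = 0) ∧
    DirectSum.IsInternal
      (![LinearMap.range d, LinearMap.range L,
         (LinearMap.range d)ᗮ ⊓ LinearMap.ker L] : Fin 3 → Submodule ℝ E) := by
  have hL : L.IsSymmetric := hsym
  have hdL : LinearMap.range d ⟂ LinearMap.range L := by
    rw [Submodule.isOrtho_iff_le, hL.orthogonal_range]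
    exact LinearMap.range_le_ker_iff.mpr hLd
  have hH : (LinearMap.range d)ᗮ ⊓ LinearMap.ker L
      = (LinearMap.range d ⊔ LinearMap.range L)ᗮ := by
    rw [← hL.orthogonal_range, Submodule.inf_orthogonal]
  rw [hH]
  exact ⟨Submodule.isOrtho_iff_inner_eq.mp hdL,
    Submodule.isOrtho_iff_inner_eq.mp (Submodule.isOrtho_orthogonal_sup_left _ _),
    Submodule.isOrtho_iff_inner_eq.mp (Submodule.isOrtho_orthogonal_sup_right _ _),
    hdL.isInternal_orthogonal_sup⟩
end

section
/- Let E be a finite-dimensional real inner product space, F a real vector space, and d : F → E, L : E → E linear maps such that L is symmetric (⟨L u, v⟩ = ⟨u, L v⟩ for all u, v ∈ E) and L ∘ d = 0. Then range(d) ⊆ ker L and range(L) ⊆ (range d)ᗮ, and the bilinear map (u, v) ↦ ⟨u, v⟩ descends to a well-defined nondegenerate bilinear pairing (ker L ⧸ range d) × ((range d)ᗮ ⧸ range L) → ℝ. -/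
/-!
For submodules `U`, `K` of a real inner product space, the inner product on `K × Uᗮ` vanishes on
`(U ∩ K) × Uᗮ` and on `K × (Uᗮ ∩ Kᗮ)`, so it descends to `(K ⧸ U) × (Uᗮ ⧸ Kᗮ)`. Its left kernel is
`K ∩ Uᗮᗮ = K ∩ U` once `U` is closed, and its right kernel is `Uᗮ ∩ Kᗮ`; so the pairing is
nondegenerate. The theorem is the case `K = ker L`, `U = range d`: symmetry of `L` gives
`ker L = (range L)ᗮ`, hence `(ker L)ᗮ = range L` in finite dimension.
-/

open RealInnerProductSpace

namespace Submodule

variable {E : Type*} [NormedAddCommGroup E] [InnerProductSpace ℝ E]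

noncomputable def innerQuotientPairing (U K : Submodule ℝ E) :
    (K ⧸ U.comap K.subtype) →ₗ[ℝ] (Uᗮ ⧸ Kᗮ.comap Uᗮ.subtype) →ₗ[ℝ] ℝ :=
  ((innerₗ E).compl₁₂ K.subtype Uᗮ.subtype).liftQ₂ _ _
    (fun _ hu => LinearMap.mem_ker.mpr <| LinearMap.ext fun v =>
      inner_right_of_mem_orthogonal hu v.2)
    (fun _ hv => LinearMap.mem_ker.mpr <| LinearMap.ext fun u =>
      inner_right_of_mem_orthogonal u.2 hv)

variable {U K : Submodule ℝ E}

@[simp]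
theorem innerQuotientPairing_mk_mk (u : K) (v : Uᗮ) :
    innerQuotientPairing U K (Quotient.mk u) (Quotient.mk v) = ⟪(u : E), (v : E)⟫ :=
  LinearMap.liftQ₂_mk ..

theorem innerQuotientPairing_separatingLeft [U.HasOrthogonalProjection] :
    (innerQuotientPairing U K).SeparatingLeft := by
  intro x hx
  induction x using Quotient.induction_on with
  | H u =>
    have hu : (u : E) ∈ Uᗮᗮ := fun v hv => by
      simpa [real_inner_comm] using hx (Quotient.mk ⟨v, hv⟩)
    rw [orthogonal_orthogonal] at hu
    exact (Quotient.mk_eq_zero _).mpr hu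

theorem innerQuotientPairing_separatingRight : (innerQuotientPairing U K).SeparatingRight := by
  intro y hy
  induction y using Quotient.induction_on with
  | H v =>
    have hv : (v : E) ∈ Kᗮ := fun u hu => by simpa using hy (Quotient.mk ⟨u, hu⟩)
    exact (Quotient.mk_eq_zero _).mpr hv

end Submodule

/-- Finite-dimensional algebraic core of Proposition 2.2 of Branson–Gover:
if `L` is symmetric and `L ∘ d = 0` then `range d ⊆ ker L`,
`range L ⊆ (range d)ᗮ`, and the inner product descends to a well-defined
nondegenerate bilinear pairing `(ker L ⧸ range d) × ((range d)ᗮ ⧸ range L) → ℝ`. -/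
theorem stmt_1
    {E F : Type*} [NormedAddCommGroup E] [InnerProductSpace ℝ E]
    [FiniteDimensional ℝ E] [AddCommGroup F] [Module ℝ F]
    (d : F →ₗ[ℝ] E) (L : E →ₗ[ℝ] E)
    (hsym : ∀ u v : E, ⟪L u, v⟫ = ⟪u, L v⟫)
    (hLd : L ∘ₗ d = 0) :
    LinearMap.range d ≤ LinearMap.ker L ∧
    LinearMap.range L ≤ (LinearMap.range d)ᗮ ∧
    ∃ B : (↥(LinearMap.ker L) ⧸
            (LinearMap.range d).comap (LinearMap.ker L).subtype) →ₗ[ℝ]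
          (↥((LinearMap.range d)ᗮ) ⧸
            (LinearMap.range L).comap ((LinearMap.range d)ᗮ).subtype) →ₗ[ℝ] ℝ,
      (∀ (u : ↥(LinearMap.ker L)) (v : ↥((LinearMap.range d)ᗮ)),
          B (Submodule.Quotient.mk u) (Submodule.Quotient.mk v) = ⟪(u : E), (v : E)⟫) ∧
      (∀ x, (∀ y, B x y = 0) → x = 0) ∧
      (∀ y, (∀ x, B x y = 0) → y = 0) := by
  have hrange_le_ker : LinearMap.range d ≤ LinearMap.ker L :=
    LinearMap.range_le_ker_iff.mpr hLd
  have hker_orthogonal : (LinearMap.ker L)ᗮ = LinearMap.range L := by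
    rw [← LinearMap.IsSymmetric.orthogonal_range hsym, Submodule.orthogonal_orthogonal]
  rw [← hker_orthogonal]
  exact ⟨hrange_le_ker, Submodule.orthogonal_le hrange_le_ker,
    Submodule.innerQuotientPairing _ _, Submodule.innerQuotientPairing_mk_mk,
    Submodule.innerQuotientPairing_separatingLeft, Submodule.innerQuotientPairing_separatingRight⟩
end

section
/- Let V₀, V₁, V₂, V₃, T be real vector spaces, let d₀ : V₀ → V₁, d₁ : V₁ → V₂, d₂ : V₂ → V₃, G : V₂ → T be linear maps with d₁ ∘ d₀ = 0 and d₂ ∘ d₁ = 0, let c be a nonzero real number, and set L := c • (G ∘ d₁) : V₁ → T. Then range(d₀) ⊆ ker d₁ ⊆ ker L, and the sequence 0 → ker d₁ ⧸ range d₀ → ker L ⧸ range d₀ → (ker G ⊓ ker d₂) → ker d₂ ⧸ range d₁ is exact, where the first map is induced by the inclusion ker d₁ ⊆ ker L, the second sends the class of u to d₁ u (which indeed lies in ker G ⊓ ker d₂), and the third sends w to its class modulo range d₁. Here exactness means: the first map is injective, the kernel of the second map equals the range of the first, and the kernel of the third map equals the range of the second. -/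
/-! Since `c ≠ 0`, `ker L = d₁⁻¹(ker G)`, and as `d₂ ∘ d₁ = 0` this is `d₁⁻¹(ker G ⊓ ker d₂)`.
With that description of `ker L`, each of the three exactness claims is an instance of a general
fact about subquotients: `A ⧸ N → B ⧸ N` is injective for `A ≤ B`, the map `B ⧸ N → P` induced by
`f` has kernel `ker f ⧸ N`, and an element of `S` dies in `Z ⧸ range f` iff it is `f` of an element
of `f⁻¹(S)`. -/

open LinearMap

namespace Submodule

variable {R M P : Type*} [Ring R] [AddCommGroup M] [Module R M] [AddCommGroup P] [Module R P]

theorem mapQ_inclusion_injective {N A B : Submodule R M} (hAB : A ≤ B)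
    (h : N.comap A.subtype ≤ (N.comap B.subtype).comap (inclusion hAB)) :
    Function.Injective ((N.comap A.subtype).mapQ (N.comap B.subtype) (inclusion hAB) h) := by
  rw [← LinearMap.ker_eq_bot, ker_mapQ]
  exact mkQ_map_self _

theorem ker_liftQ_restrict_eq_range_mapQ_inclusion {N B : Submodule R M} {S : Submodule R P}
    (f : M →ₗ[R] P) (hfS : ∀ x ∈ B, f x ∈ S) (hfB : ker f ≤ B)
    (hN : N.comap B.subtype ≤ ker (f.restrict hfS))
    (h : N.comap (ker f).subtype ≤ (N.comap B.subtype).comap (inclusion hfB)) :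
    ker ((N.comap B.subtype).liftQ (f.restrict hfS) hN) =
      range ((N.comap (ker f).subtype).mapQ (N.comap B.subtype) (inclusion hfB) h) := by
  rw [ker_liftQ, ker_restrict, range_mapQ, range_inclusion]

theorem ker_mkQ_comp_inclusion_eq_range_restrict {B : Submodule R M} {S Z : Submodule R P}
    (hSZ : S ≤ Z) (f : M →ₗ[R] P) (hfS : ∀ x ∈ B, f x ∈ S) (hSB : ∀ x, f x ∈ S → x ∈ B) :
    ker (((range f).comap Z.subtype).mkQ ∘ₗ inclusion hSZ) = range (f.restrict hfS) := by
  ext w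
  simp only [mem_ker, coe_comp, Function.comp_apply, mkQ_apply, Quotient.mk_eq_zero, mem_comap,
    subtype_apply, coe_inclusion, mem_range]
  constructor
  · rintro ⟨x, hx⟩
    exact ⟨⟨x, hSB x (hx ▸ w.2)⟩, Subtype.ext hx⟩
  · rintro ⟨x, rfl⟩
    exact ⟨x, rfl⟩

end Submodule

/-- Algebraic content of Proposition 2.5 of Branson–Gover: the canonical exact
sequence `0 → H^{k-1}(M) → H^{k-1}_L(M) → ℋ^k → H^k(M)`, where
`L = c • (G ∘ d₁)` encodes `(n−2k+4) G_k ∘ d = L_{k-1}`. -/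
theorem stmt_3
    {V₀ V₁ V₂ V₃ T : Type*}
    [AddCommGroup V₀] [Module ℝ V₀] [AddCommGroup V₁] [Module ℝ V₁]
    [AddCommGroup V₂] [Module ℝ V₂] [AddCommGroup V₃] [Module ℝ V₃]
    [AddCommGroup T] [Module ℝ T]
    (d₀ : V₀ →ₗ[ℝ] V₁) (d₁ : V₁ →ₗ[ℝ] V₂) (d₂ : V₂ →ₗ[ℝ] V₃)
    (G : V₂ →ₗ[ℝ] T)
    (h₁₀ : d₁ ∘ₗ d₀ = 0) (h₂₁ : d₂ ∘ₗ d₁ = 0)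
    (c : ℝ) (hc : c ≠ 0)
    (L : V₁ →ₗ[ℝ] T) (hL : L = c • (G ∘ₗ d₁)) :
    ∃ (_ : LinearMap.range d₀ ≤ LinearMap.ker d₁)
      (hkk : LinearMap.ker d₁ ≤ LinearMap.ker L)
      (_ : ∀ u ∈ LinearMap.ker L, d₁ u ∈ LinearMap.ker G ⊓ LinearMap.ker d₂)
      (i : (↥(LinearMap.ker d₁) ⧸
              (LinearMap.range d₀).comap (LinearMap.ker d₁).subtype) →ₗ[ℝ]
           (↥(LinearMap.ker L) ⧸
              (LinearMap.range d₀).comap (LinearMap.ker L).subtype))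
      (j : (↥(LinearMap.ker L) ⧸
              (LinearMap.range d₀).comap (LinearMap.ker L).subtype) →ₗ[ℝ]
           ↥(LinearMap.ker G ⊓ LinearMap.ker d₂))
      (k : ↥(LinearMap.ker G ⊓ LinearMap.ker d₂) →ₗ[ℝ]
           (↥(LinearMap.ker d₂) ⧸
              (LinearMap.range d₁).comap (LinearMap.ker d₂).subtype)),
      (∀ (u : V₁) (hu : u ∈ LinearMap.ker d₁),
          i (Submodule.Quotient.mk ⟨u, hu⟩) = Submodule.Quotient.mk ⟨u, hkk hu⟩) ∧
      (∀ (u : V₁) (hu : u ∈ LinearMap.ker L),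
          (j (Submodule.Quotient.mk ⟨u, hu⟩) : V₂) = d₁ u) ∧
      (∀ w : ↥(LinearMap.ker G ⊓ LinearMap.ker d₂),
          k w = Submodule.Quotient.mk ⟨(w : V₂), (Submodule.mem_inf.mp w.2).2⟩) ∧
      Function.Injective i ∧
      LinearMap.ker j = LinearMap.range i ∧
      LinearMap.ker k = LinearMap.range j := by
  have hrange₀ : range d₀ ≤ ker d₁ := range_le_ker_iff.mpr h₁₀
  have hkerL : ker L = (ker G).comap d₁ := by rw [hL, ker_smul _ _ hc, ker_comp]
  have hkk : ker d₁ ≤ ker L := hkerL ▸ ker_le_comap d₁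
  have hmemL : ∀ u, d₁ u ∈ ker G ⊓ ker d₂ ↔ u ∈ ker L := fun u => by
    rw [hkerL, Submodule.mem_comap, Submodule.mem_inf,
      and_iff_left (range_le_ker_iff.mpr h₂₁ (mem_range_self d₁ u))]
  have hd₁ : ∀ u ∈ ker L, d₁ u ∈ ker G ⊓ ker d₂ := fun u => (hmemL u).2
  have hN : (range d₀).comap (ker L).subtype ≤ ker (d₁.restrict hd₁) := by
    rw [ker_restrict]
    exact Submodule.comap_mono hrange₀
  refine ⟨hrange₀, hkk, hd₁, Submodule.mapQ _ _ (Submodule.inclusion hkk) fun _ hx => hx,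
    Submodule.liftQ _ (d₁.restrict hd₁) hN, Submodule.mkQ _ ∘ₗ Submodule.inclusion inf_le_right,
    fun _ _ => rfl, fun _ _ => rfl, fun _ => rfl, Submodule.mapQ_inclusion_injective _ _,
    Submodule.ker_liftQ_restrict_eq_range_mapQ_inclusion _ _ _ _ _, ?_⟩
  rw [Submodule.range_liftQ]
  exact Submodule.ker_mkQ_comp_inclusion_eq_range_restrict _ _ _ fun u => (hmemL u).1
end

section
/- Let V₀, V₁, V₂, V₃, T, T' be real vector spaces, let d₀ : V₀ → V₁, d₁ : V₁ → V₂, d₂ : V₂ → V₃, G : V₂ → T, L' : V₂ → T' be linear maps with d₁ ∘ d₀ = 0, d₂ ∘ d₁ = 0 and L' ∘ d₁ = 0, let c be a nonzero real number, and set L := c • (G ∘ d₁) : V₁ → T. Then the sequence 0 → ker d₁ ⧸ range d₀ → ker L ⧸ range d₀ → (ker L' ⊓ ker G) → ker L' ⧸ range d₁ is exact, where the first map is induced by the inclusion ker d₁ ⊆ ker L, the second sends the class of u to d₁ u (which lies in ker L' ⊓ ker G), and the third sends w to its class modulo range d₁. -/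
/-!
Everything follows from `ker L = d₁⁻¹(ker L' ⊓ ker G)`, which holds because `c ≠ 0` and
`L' ∘ d₁ = 0`. Given that, the sequence is the usual one relating the quotients
`P ⧸ (S ⊓ P)` of nested submodules `ker d₁ ≤ ker L` by `S = range d₀`: the first map is
injective because `S ⊓ ker d₁ = (S ⊓ ker L) ⊓ ker d₁`, the middle kernel is the set of classes
killed by `d₁`, and an element of `ker L' ⊓ ker G` of the form `d₁ u` has `u ∈ ker L`.
-/

open LinearMap Submodule

namespace Submodule

variable {R M : Type*} [Ring R] [AddCommGroup M] [Module R M]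

def quotientInclusion (S : Submodule R M) {P Q : Submodule R M} (h : P ≤ Q) :
    (P ⧸ S.comap P.subtype) →ₗ[R] (Q ⧸ S.comap Q.subtype) :=
  mapQ _ _ (inclusion h) (by rw [← comap_comp, subtype_comp_inclusion])

theorem quotientInclusion_mk (S : Submodule R M) {P Q : Submodule R M} (h : P ≤ Q) (x : P) :
    quotientInclusion S h (Quotient.mk x) = Quotient.mk (inclusion h x) :=
  rfl

theorem quotientInclusion_injective (S : Submodule R M) {P Q : Submodule R M} (h : P ≤ Q) :
    Function.Injective (quotientInclusion S h) := by
  rw [← ker_eq_bot, eq_bot_iff]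
  rintro x hx
  obtain ⟨a, rfl⟩ := Quotient.mk_surjective _ x
  rw [mem_ker, quotientInclusion_mk, Quotient.mk_eq_zero] at hx
  exact (Quotient.mk_eq_zero _).mpr hx

end Submodule

namespace LinearMap

variable {R M N : Type*} [Ring R] [AddCommGroup M] [Module R M] [AddCommGroup N] [Module R N]
  (f : M →ₗ[R] N) {S Q : Submodule R M} {W : Submodule R N}

def quotientRestrict (hS : S ≤ ker f) (hQ : Q ≤ W.comap f) :
    (Q ⧸ S.comap Q.subtype) →ₗ[R] W :=
  (S.comap Q.subtype).liftQ (f.restrict hQ) (by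
    rw [ker_restrict]
    exact comap_mono hS)

theorem ker_quotientRestrict (hS : S ≤ ker f) (hQ : Q ≤ W.comap f) (hker : ker f ≤ Q) :
    ker (quotientRestrict f hS hQ) = range (S.quotientInclusion hker) := by
  ext x
  obtain ⟨u, rfl⟩ := Submodule.Quotient.mk_surjective _ x
  constructor
  · intro hu
    have hfu : f u = 0 := congrArg Subtype.val hu
    exact ⟨Submodule.Quotient.mk ⟨u, hfu⟩, rfl⟩
  · rintro ⟨y, hy⟩
    obtain ⟨v, rfl⟩ := Submodule.Quotient.mk_surjective _ y
    rw [← hy, mem_ker]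
    exact Subtype.ext v.2

theorem ker_mkQ_comp_inclusion {Q' : Submodule R N} (hS : S ≤ ker f) (hQ : Q = W.comap f)
    (hWQ' : W ≤ Q') :
    ker (((range f).comap Q'.subtype).mkQ ∘ₗ inclusion hWQ') =
      range (quotientRestrict f hS hQ.le) := by
  ext w
  rw [mem_ker, comp_apply, mkQ_apply, Submodule.Quotient.mk_eq_zero, mem_comap]
  constructor
  · rintro ⟨u, hu⟩
    have huQ : u ∈ Q := hQ ▸ (show f u ∈ W from hu ▸ w.2)
    exact ⟨Submodule.Quotient.mk ⟨u, huQ⟩, Subtype.ext hu⟩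
  · rintro ⟨y, rfl⟩
    obtain ⟨u, rfl⟩ := Submodule.Quotient.mk_surjective _ y
    exact ⟨u, rfl⟩

end LinearMap

theorem stmt_5_general
    {V₀ V₁ V₂ T T' : Type*}
    [AddCommGroup V₀] [Module ℝ V₀] [AddCommGroup V₁] [Module ℝ V₁]
    [AddCommGroup V₂] [Module ℝ V₂]
    [AddCommGroup T] [Module ℝ T] [AddCommGroup T'] [Module ℝ T']
    (d₀ : V₀ →ₗ[ℝ] V₁) (d₁ : V₁ →ₗ[ℝ] V₂)
    (G : V₂ →ₗ[ℝ] T) (L' : V₂ →ₗ[ℝ] T')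
    (h₁₀ : d₁ ∘ₗ d₀ = 0) (hL' : L' ∘ₗ d₁ = 0)
    (c : ℝ) (hc : c ≠ 0)
    (L : V₁ →ₗ[ℝ] T) (hL : L = c • (G ∘ₗ d₁)) :
    ∃ (hkk : LinearMap.ker d₁ ≤ LinearMap.ker L)
      (_ : ∀ u ∈ LinearMap.ker L, d₁ u ∈ LinearMap.ker L' ⊓ LinearMap.ker G)
      (i : (↥(LinearMap.ker d₁) ⧸
              (LinearMap.range d₀).comap (LinearMap.ker d₁).subtype) →ₗ[ℝ]
           (↥(LinearMap.ker L) ⧸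
              (LinearMap.range d₀).comap (LinearMap.ker L).subtype))
      (j : (↥(LinearMap.ker L) ⧸
              (LinearMap.range d₀).comap (LinearMap.ker L).subtype) →ₗ[ℝ]
           ↥(LinearMap.ker L' ⊓ LinearMap.ker G))
      (k : ↥(LinearMap.ker L' ⊓ LinearMap.ker G) →ₗ[ℝ]
           (↥(LinearMap.ker L') ⧸
              (LinearMap.range d₁).comap (LinearMap.ker L').subtype)),
      (∀ (u : V₁) (hu : u ∈ LinearMap.ker d₁),
          i (Submodule.Quotient.mk ⟨u, hu⟩) = Submodule.Quotient.mk ⟨u, hkk hu⟩) ∧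
      (∀ (u : V₁) (hu : u ∈ LinearMap.ker L),
          (j (Submodule.Quotient.mk ⟨u, hu⟩) : V₂) = d₁ u) ∧
      (∀ w : ↥(LinearMap.ker L' ⊓ LinearMap.ker G),
          k w = Submodule.Quotient.mk ⟨(w : V₂), (Submodule.mem_inf.mp w.2).1⟩) ∧
      Function.Injective i ∧
      LinearMap.ker j = LinearMap.range i ∧
      LinearMap.ker k = LinearMap.range j := by
  have hkerL : ker L = (ker L' ⊓ ker G).comap d₁ := by
    rw [hL, ker_smul _ _ hc, comap_inf, ← ker_comp, ← ker_comp, hL', ker_zero, top_inf_eq]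
  have hkk : ker d₁ ≤ ker L := hkerL ▸ ker_le_comap d₁
  have hS : range d₀ ≤ ker d₁ := range_le_ker_iff.mpr h₁₀
  refine ⟨hkk, fun u hu => hkerL.le hu, (range d₀).quotientInclusion hkk,
    d₁.quotientRestrict hS hkerL.le,
    ((range d₁).comap (ker L').subtype).mkQ ∘ₗ inclusion inf_le_left,
    fun _ _ => rfl, fun _ _ => rfl, fun _ => rfl, quotientInclusion_injective _ hkk,
    ker_quotientRestrict d₁ hS hkerL.le hkk, ker_mkQ_comp_inclusion d₁ hS hkerL inf_le_left⟩

/-- Remark after Proposition 2.5 of Branson–Gover: the canonical exact sequence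
`0 → H^{k-1}(M) → H^{k-1}_L(M) → ℋ^k_𝕃 → H^k_L(M)`, where `ℋ^k_𝕃` is the joint
null space of `L'` (modelling `L_k`) and `G` (modelling `G_k`), and
`L = c • (G ∘ d₁)` encodes `(n−2k+4) G_k ∘ d = L_{k-1}`. -/
theorem stmt_5
    {V₀ V₁ V₂ V₃ T T' : Type*}
    [AddCommGroup V₀] [Module ℝ V₀] [AddCommGroup V₁] [Module ℝ V₁]
    [AddCommGroup V₂] [Module ℝ V₂] [AddCommGroup V₃] [Module ℝ V₃]
    [AddCommGroup T] [Module ℝ T] [AddCommGroup T'] [Module ℝ T']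
    (d₀ : V₀ →ₗ[ℝ] V₁) (d₁ : V₁ →ₗ[ℝ] V₂) (d₂ : V₂ →ₗ[ℝ] V₃)
    (G : V₂ →ₗ[ℝ] T) (L' : V₂ →ₗ[ℝ] T')
    (h₁₀ : d₁ ∘ₗ d₀ = 0) (h₂₁ : d₂ ∘ₗ d₁ = 0) (hL' : L' ∘ₗ d₁ = 0)
    (c : ℝ) (hc : c ≠ 0)
    (L : V₁ →ₗ[ℝ] T) (hL : L = c • (G ∘ₗ d₁)) :
    ∃ (hkk : LinearMap.ker d₁ ≤ LinearMap.ker L)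
      (_ : ∀ u ∈ LinearMap.ker L, d₁ u ∈ LinearMap.ker L' ⊓ LinearMap.ker G)
      (i : (↥(LinearMap.ker d₁) ⧸
              (LinearMap.range d₀).comap (LinearMap.ker d₁).subtype) →ₗ[ℝ]
           (↥(LinearMap.ker L) ⧸
              (LinearMap.range d₀).comap (LinearMap.ker L).subtype))
      (j : (↥(LinearMap.ker L) ⧸
              (LinearMap.range d₀).comap (LinearMap.ker L).subtype) →ₗ[ℝ]
           ↥(LinearMap.ker L' ⊓ LinearMap.ker G))
      (k : ↥(LinearMap.ker L' ⊓ LinearMap.ker G) →ₗ[ℝ]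
           (↥(LinearMap.ker L') ⧸
              (LinearMap.range d₁).comap (LinearMap.ker L').subtype)),
      (∀ (u : V₁) (hu : u ∈ LinearMap.ker d₁),
          i (Submodule.Quotient.mk ⟨u, hu⟩) = Submodule.Quotient.mk ⟨u, hkk hu⟩) ∧
      (∀ (u : V₁) (hu : u ∈ LinearMap.ker L),
          (j (Submodule.Quotient.mk ⟨u, hu⟩) : V₂) = d₁ u) ∧
      (∀ w : ↥(LinearMap.ker L' ⊓ LinearMap.ker G),
          k w = Submodule.Quotient.mk ⟨(w : V₂), (Submodule.mem_inf.mp w.2).1⟩) ∧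
      Function.Injective i ∧
      LinearMap.ker j = LinearMap.range i ∧
      LinearMap.ker k = LinearMap.range j :=
  stmt_5_general d₀ d₁ G L' h₁₀ hL' c hc L hL
end

section
/- Let V₁ and V₂ be finite-dimensional real inner product spaces, V₃ a real vector space, d₁ : V₁ → V₂ and d₂ : V₂ → V₃ linear maps with d₂ ∘ d₁ = 0, G : V₂ → V₁ a linear map, c a nonzero real number, and set L := c • (G ∘ d₁) : V₁ → V₁. Assume that L is symmetric (⟨L u, v⟩ = ⟨u, L v⟩), that ker L = ker d₁, and that for every w ∈ ker d₂ the element G w lies in the range of the adjoint d₁† : V₂ → V₁ of d₁. Then the linear map from {w ∈ ker d₂ : G w = 0} to ker d₂ ⧸ range d₁ sending w to its class is a linear isomorphism. -/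
/-!
Every closed form is cohomologous to a unique conformal harmonic as soon as
`range d₁` meets `ker G` trivially and `ker d₂ ≤ range d₁ + ker G`. The first holds because
`d₁ u ∈ ker G` forces `L u = 0`, hence `d₁ u = 0`. For the second, `L` being symmetric gives
`range L = (ker L)ᗮ = (ker d₁)ᗮ = range d₁†`, so for closed `w` the hypothesis puts `G w` in
`range L ⊆ G (range d₁)`, and `w` differs from an exact form by an element of `ker G`.
-/

open RealInnerProductSpace

namespace Submodule

variable {R M : Type*} [Ring R] [AddCommGroup M] [Module R M]

theorem bijective_mkQ_comp_inclusion_inf {B H K : Submodule R M} (hBK : B ≤ K)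
    (hdisj : Disjoint B H) (hsup : K ≤ B ⊔ H) :
    Function.Bijective
      ((B.comap K.subtype).mkQ ∘ₗ inclusion (inf_le_left : K ⊓ H ≤ K)) := by
  constructor
  · rw [← LinearMap.ker_eq_bot, eq_bot_iff]
    rintro ⟨x, hxK, hxH⟩ hx
    have hxB : x ∈ B := by simpa using hx
    ext
    exact disjoint_def.mp hdisj x hxB hxH
  · intro q
    obtain ⟨⟨x, hxK⟩, rfl⟩ := mkQ_surjective _ q
    obtain ⟨b, hb, h, hh, rfl⟩ := mem_sup.mp (hsup hxK)
    have hhK : h ∈ K := by simpa using K.sub_mem hxK (hBK hb)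
    refine ⟨⟨h, hhK, hh⟩, (Quotient.eq _).mpr ?_⟩
    simpa using B.neg_mem hb

end Submodule

namespace LinearMap

variable {R M N P : Type*} [Ring R] [AddCommGroup M] [Module R M] [AddCommGroup N]
  [Module R N] [AddCommGroup P] [Module R P]

theorem disjoint_range_ker_of_ker_comp_le {f : M →ₗ[R] N} {g : N →ₗ[R] P}
    (h : ker (g ∘ₗ f) ≤ ker f) : Disjoint (range f) (ker g) := by
  rw [Submodule.disjoint_def]
  rintro _ ⟨u, rfl⟩ hu
  exact h hu

theorem le_range_sup_ker_of_map_le_range_comp {f : M →ₗ[R] N} {g : N →ₗ[R] P}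
    {K : Submodule R N} (h : K.map g ≤ range (g ∘ₗ f)) : K ≤ range f ⊔ ker g := by
  rwa [← Submodule.comap_map_eq, ← Submodule.map_le_iff_le_comap, ← range_comp]

theorem IsSymmetric.range_eq_range_adjoint_of_ker_eq {𝕜 E F : Type*} [RCLike 𝕜]
    [NormedAddCommGroup E] [InnerProductSpace 𝕜 E] [FiniteDimensional 𝕜 E]
    [NormedAddCommGroup F] [InnerProductSpace 𝕜 F] [FiniteDimensional 𝕜 F]
    {T : E →ₗ[𝕜] E} (hT : T.IsSymmetric) {f : E →ₗ[𝕜] F} (h : ker T = ker f) :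
    range T = range f.adjoint := by
  rw [← orthogonal_ker, ← h, orthogonal_ker, hT.adjoint_eq]

end LinearMap

theorem stmt_6_general
    {V₁ V₂ V₃ : Type*}
    [NormedAddCommGroup V₁] [InnerProductSpace ℝ V₁] [FiniteDimensional ℝ V₁]
    [NormedAddCommGroup V₂] [InnerProductSpace ℝ V₂] [FiniteDimensional ℝ V₂]
    [AddCommGroup V₃] [Module ℝ V₃]
    (d₁ : V₁ →ₗ[ℝ] V₂) (d₂ : V₂ →ₗ[ℝ] V₃) (h₂₁ : d₂ ∘ₗ d₁ = 0)
    (G : V₂ →ₗ[ℝ] V₁) (c : ℝ)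
    (L : V₁ →ₗ[ℝ] V₁) (hL : L = c • (G ∘ₗ d₁))
    (hsym : ∀ u v : V₁, ⟪L u, v⟫ = ⟪u, L v⟫)
    (hker : LinearMap.ker L = LinearMap.ker d₁)
    (hG : ∀ w ∈ LinearMap.ker d₂, G w ∈ LinearMap.range (LinearMap.adjoint d₁)) :
    Function.Bijective
      (((LinearMap.range d₁).comap (LinearMap.ker d₂).subtype).mkQ ∘ₗ
        Submodule.inclusion
          (inf_le_left :
            LinearMap.ker d₂ ⊓ LinearMap.ker G ≤ LinearMap.ker d₂)) := by
  have hexact : LinearMap.range d₁ ≤ LinearMap.ker d₂ := LinearMap.range_le_ker_iff.mpr h₂₁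
  have hdisj : Disjoint (LinearMap.range d₁) (LinearMap.ker G) :=
    LinearMap.disjoint_range_ker_of_ker_comp_le <|
      hker ▸ hL ▸ LinearMap.ker_le_ker_smul _ c
  have hrange : LinearMap.range L = LinearMap.range (LinearMap.adjoint d₁) :=
    LinearMap.IsSymmetric.range_eq_range_adjoint_of_ker_eq hsym hker
  have hsup : LinearMap.ker d₂ ≤ LinearMap.range d₁ ⊔ LinearMap.ker G := by
    refine LinearMap.le_range_sup_ker_of_map_le_range_comp ?_
    rintro _ ⟨w, hw, rfl⟩
    exact LinearMap.range_smul_le_range _ c (hL ▸ hrange ▸ hG w hw)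
  exact Submodule.bijective_mkQ_comp_inclusion_inf hexact hdisj hsup

/-- Finite-dimensional algebraic content of Theorem 2.6 of Branson–Gover:
if `ker L = ker d₁` (encoding `H^{k-1}(M) = H^{k-1}_L(M)`) and `G w ∈ range d₁†`
for all closed `w`, then the space `{w ∈ ker d₂ : G w = 0}` of conformal
harmonics maps isomorphically onto `ker d₂ ⧸ range d₁`. -/
theorem stmt_6
    {V₁ V₂ V₃ : Type*}
    [NormedAddCommGroup V₁] [InnerProductSpace ℝ V₁] [FiniteDimensional ℝ V₁]
    [NormedAddCommGroup V₂] [InnerProductSpace ℝ V₂] [FiniteDimensional ℝ V₂]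
    [AddCommGroup V₃] [Module ℝ V₃]
    (d₁ : V₁ →ₗ[ℝ] V₂) (d₂ : V₂ →ₗ[ℝ] V₃) (h₂₁ : d₂ ∘ₗ d₁ = 0)
    (G : V₂ →ₗ[ℝ] V₁) (c : ℝ) (hc : c ≠ 0)
    (L : V₁ →ₗ[ℝ] V₁) (hL : L = c • (G ∘ₗ d₁))
    (hsym : ∀ u v : V₁, ⟪L u, v⟫ = ⟪u, L v⟫)
    (hker : LinearMap.ker L = LinearMap.ker d₁)
    (hG : ∀ w ∈ LinearMap.ker d₂, G w ∈ LinearMap.range (LinearMap.adjoint d₁)) :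
    Function.Bijective
      (((LinearMap.range d₁).comap (LinearMap.ker d₂).subtype).mkQ ∘ₗ
        Submodule.inclusion
          (inf_le_left :
            LinearMap.ker d₂ ⊓ LinearMap.ker G ≤ LinearMap.ker d₂)) :=
  stmt_6_general d₁ d₂ h₂₁ G c L hL hsym hker hG
end

section
/- Let A, B, C, A', B', C' be real vector spaces and let d : A → B, d' : B → C, Q : B → B', δ : B' → A', δ' : C' → B' be linear maps with d' ∘ d = 0 and δ ∘ δ' = 0. Define ℋ := {w ∈ B : d' w = 0 and δ(Q w) = 0}, 𝓑 := range(d) ⊓ Q⁻¹(range δ') (the set of elements d φ with Q(d φ) ∈ range δ'), H := ker d' ⧸ range d, H' := ker δ ⧸ range δ', ℋ' := {ξ ∈ B' : δ ξ = δ(Q η) for some η ∈ ker d'}, and 𝓑' := (Q ∘ d)(A) + range δ' (sum of subspaces of B'). Then: (a) 𝓑 ⊆ ℋ and 𝓑' ⊆ ℋ'; (b) for every w ∈ ℋ one has Q w ∈ ker δ, and the map I : ℋ → H ⊕ H' sending w to ([w], [Q w]) induces an injective linear map Ī : ℋ ⧸ 𝓑 → H ⊕ H'; (c) there is a well-defined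 surjective linear map P̄ : H ⊕ H' → ℋ' ⧸ 𝓑' sending ([η], [ξ]) to the class of ξ − Q η for any representatives η ∈ ker d', ξ ∈ ker δ (and ξ − Q η indeed lies in ℋ'); (d) ker P̄ = range Ī. In particular 0 → ℋ ⧸ 𝓑 → H ⊕ H' → ℋ' ⧸ 𝓑' → 0 is a short exact sequence. -/
set_option maxHeartbeats 1000000 in
/-- The exact sequence (2.11) of Branson–Gover:
`0 → ℋ^k/𝓑^k → H^k(M) ⊕ H_k(M) → ℋ_k/𝓑_k → 0`, in a fixed conformal scale.
Here `ℋ = ker d' ⊓ ker (δ ∘ Q)`, `𝓑 = range d ⊓ Q⁻¹(range δ')`,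
`ℋ' = δ⁻¹(δ(Q(ker d')))`, `𝓑' = range (Q ∘ d) ⊔ range δ'`. -/
theorem stmt_7
    {A B C A' B' C' : Type*}
    [AddCommGroup A] [Module ℝ A] [AddCommGroup B] [Module ℝ B]
    [AddCommGroup C] [Module ℝ C] [AddCommGroup A'] [Module ℝ A']
    [AddCommGroup B'] [Module ℝ B'] [AddCommGroup C'] [Module ℝ C']
    (d : A →ₗ[ℝ] B) (d' : B →ₗ[ℝ] C) (Q : B →ₗ[ℝ] B')
    (δ : B' →ₗ[ℝ] A') (δ' : C' →ₗ[ℝ] B')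
    (hdd : d' ∘ₗ d = 0) (hδδ : δ ∘ₗ δ' = 0) :
    (LinearMap.range d ⊓ Submodule.comap Q (LinearMap.range δ') ≤
        LinearMap.ker d' ⊓ LinearMap.ker (δ ∘ₗ Q)) ∧
    (LinearMap.range (Q ∘ₗ d) ⊔ LinearMap.range δ' ≤
        Submodule.comap δ (Submodule.map δ (Submodule.map Q (LinearMap.ker d')))) ∧
    ∃ (hQ : ∀ w ∈ LinearMap.ker d' ⊓ LinearMap.ker (δ ∘ₗ Q), Q w ∈ LinearMap.ker δ)
      (hmem : ∀ (η : ↥(LinearMap.ker d')) (ξ : ↥(LinearMap.ker δ)),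
        (ξ : B') - Q (η : B) ∈
          Submodule.comap δ (Submodule.map δ (Submodule.map Q (LinearMap.ker d'))))
      (Ibar : (↥(LinearMap.ker d' ⊓ LinearMap.ker (δ ∘ₗ Q)) ⧸
            (LinearMap.range d ⊓ Submodule.comap Q (LinearMap.range δ')).comap
              (LinearMap.ker d' ⊓ LinearMap.ker (δ ∘ₗ Q)).subtype) →ₗ[ℝ]
          (↥(LinearMap.ker d') ⧸
            (LinearMap.range d).comap (LinearMap.ker d').subtype) ×
          (↥(LinearMap.ker δ) ⧸
            (LinearMap.range δ').comap (LinearMap.ker δ).subtype))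
      (Pbar : ((↥(LinearMap.ker d') ⧸
            (LinearMap.range d).comap (LinearMap.ker d').subtype) ×
          (↥(LinearMap.ker δ) ⧸
            (LinearMap.range δ').comap (LinearMap.ker δ).subtype)) →ₗ[ℝ]
          (↥(Submodule.comap δ (Submodule.map δ (Submodule.map Q (LinearMap.ker d')))) ⧸
            (LinearMap.range (Q ∘ₗ d) ⊔ LinearMap.range δ').comap
              (Submodule.comap δ
                (Submodule.map δ (Submodule.map Q (LinearMap.ker d')))).subtype)),
      (∀ w : ↥(LinearMap.ker d' ⊓ LinearMap.ker (δ ∘ₗ Q)),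
          Ibar (Submodule.Quotient.mk w) =
            (Submodule.Quotient.mk (Submodule.inclusion inf_le_left w),
             Submodule.Quotient.mk (LinearMap.restrict Q hQ w))) ∧
      (∀ (η : ↥(LinearMap.ker d')) (ξ : ↥(LinearMap.ker δ)),
          Pbar (Submodule.Quotient.mk η, Submodule.Quotient.mk ξ) =
            Submodule.Quotient.mk ⟨(ξ : B') - Q (η : B), hmem η ξ⟩) ∧
      Function.Injective Ibar ∧
      Function.Surjective Pbar ∧
      LinearMap.ker Pbar = LinearMap.range Ibar := by
  have hdd' : ∀ a, d' (d a) = 0 := fun a => by simpa using DFunLike.congr_fun hdd a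
  have hδδ' : ∀ a, δ (δ' a) = 0 := fun a => by simpa using DFunLike.congr_fun hδδ a
  set ℋ := LinearMap.ker d' ⊓ LinearMap.ker (δ ∘ₗ Q) with hℋdef
  set 𝓑 := LinearMap.range d ⊓ Submodule.comap Q (LinearMap.range δ') with h𝓑def
  set ℋ' := Submodule.comap δ (Submodule.map δ (Submodule.map Q (LinearMap.ker d'))) with hℋ'def
  set 𝓑' := LinearMap.range (Q ∘ₗ d) ⊔ LinearMap.range δ' with h𝓑'def
  have ha : 𝓑 ≤ ℋ := by
    rintro x ⟨⟨φ, rfl⟩, ⟨ψ, hψ⟩⟩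
    exact ⟨hdd' φ, by simp [LinearMap.mem_ker, ← hψ, hδδ' ψ]⟩
  have hb : 𝓑' ≤ ℋ' := by
    refine sup_le ?_ ?_
    · rintro x ⟨φ, rfl⟩
      exact ⟨Q (d φ), ⟨d φ, hdd' φ, rfl⟩, rfl⟩
    · rintro x ⟨ψ, rfl⟩
      refine ⟨Q 0, ⟨0, by simp, rfl⟩, by simp [hδδ' ψ]⟩
  have hQ : ∀ w ∈ ℋ, Q w ∈ LinearMap.ker δ := fun w hw => hw.2
  have hmem : ∀ (η : ↥(LinearMap.ker d')) (ξ : ↥(LinearMap.ker δ)),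
      (ξ : B') - Q (η : B) ∈ ℋ' := by
    intro η ξ
    refine ⟨Q (-(η : B)), ⟨-(η : B), neg_mem η.2, rfl⟩, ?_⟩
    have := ξ.2
    simp only [LinearMap.mem_ker] at this
    simp [this]
  -- the map I
  let I0 : ↥ℋ →ₗ[ℝ] _ :=
    LinearMap.prod
      ((Submodule.mkQ ((LinearMap.range d).comap (LinearMap.ker d').subtype)) ∘ₗ
        Submodule.inclusion (inf_le_left : ℋ ≤ LinearMap.ker d'))
      ((Submodule.mkQ ((LinearMap.range δ').comap (LinearMap.ker δ).subtype)) ∘ₗ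
        LinearMap.restrict Q hQ)
  have hkerI0 : 𝓑.comap ℋ.subtype ≤ LinearMap.ker I0 := by
    rintro ⟨x, hx⟩ hx𝓑
    obtain ⟨hx1, hx2⟩ := hx𝓑
    have h1 : Submodule.inclusion (inf_le_left : ℋ ≤ LinearMap.ker d') ⟨x, hx⟩ ∈
        (LinearMap.range d).comap (LinearMap.ker d').subtype := hx1
    have h2 : LinearMap.restrict Q hQ ⟨x, hx⟩ ∈
        (LinearMap.range δ').comap (LinearMap.ker δ).subtype := hx2
    simp only [LinearMap.mem_ker, I0, LinearMap.prod_apply, LinearMap.comp_apply,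
      Function.prod, Prod.mk_eq_zero, Submodule.mkQ_apply, Submodule.Quotient.mk_eq_zero]
    exact ⟨h1, h2⟩
  let Ibar := Submodule.liftQ (𝓑.comap ℋ.subtype) I0 hkerI0
  have hI : ∀ w : ↥ℋ, Ibar (Submodule.Quotient.mk w) =
      (Submodule.Quotient.mk (Submodule.inclusion inf_le_left w),
       Submodule.Quotient.mk (LinearMap.restrict Q hQ w)) := fun w => rfl
  have hIinj : Function.Injective Ibar := by
    rw [← LinearMap.ker_eq_bot]
    refine Submodule.ker_liftQ_eq_bot _ _ _ ?_
    rintro ⟨x, hx⟩ hk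
    simp only [LinearMap.mem_ker, I0, LinearMap.prod_apply, LinearMap.comp_apply,
      Function.prod, Prod.mk_eq_zero, Submodule.mkQ_apply, Submodule.Quotient.mk_eq_zero] at hk
    exact ⟨hk.1, hk.2⟩
  -- the map P
  have pf : ∀ η : ↥(LinearMap.ker d'), (-(Q ∘ₗ (LinearMap.ker d').subtype)) η ∈ ℋ' := by
    intro η
    exact ⟨Q (-(η : B)), ⟨-(η : B), neg_mem η.2, rfl⟩, by simp⟩
  have pg : ∀ ξ : ↥(LinearMap.ker δ), ((LinearMap.ker δ).subtype) ξ ∈ ℋ' := by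
    intro ξ
    refine ⟨Q 0, ⟨0, by simp, rfl⟩, ?_⟩
    have := ξ.2
    simp only [LinearMap.mem_ker] at this
    simp [this]
  let f0 : ↥(LinearMap.ker d') →ₗ[ℝ] ↥ℋ' :=
    LinearMap.codRestrict ℋ' (-(Q ∘ₗ (LinearMap.ker d').subtype)) pf
  let g0 : ↥(LinearMap.ker δ) →ₗ[ℝ] ↥ℋ' :=
    LinearMap.codRestrict ℋ' ((LinearMap.ker δ).subtype) pg
  have hkerf : (LinearMap.range d).comap (LinearMap.ker d').subtype ≤
      LinearMap.ker ((Submodule.mkQ (𝓑'.comap ℋ'.subtype)) ∘ₗ f0) := by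
    rintro η ⟨φ, hφ⟩
    simp only [LinearMap.mem_ker, LinearMap.comp_apply, Submodule.mkQ_apply,
      Submodule.Quotient.mk_eq_zero, Submodule.mem_comap]
    show -(Q ((LinearMap.ker d').subtype η)) ∈ 𝓑'
    refine Submodule.mem_sup_left ?_
    exact ⟨-φ, by simp [← hφ]⟩
  have hkerg : (LinearMap.range δ').comap (LinearMap.ker δ).subtype ≤
      LinearMap.ker ((Submodule.mkQ (𝓑'.comap ℋ'.subtype)) ∘ₗ g0) := by
    rintro ξ ⟨ψ, hψ⟩
    simp only [LinearMap.mem_ker, LinearMap.comp_apply, Submodule.mkQ_apply,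
      Submodule.Quotient.mk_eq_zero, Submodule.mem_comap]
    show ((LinearMap.ker δ).subtype ξ) ∈ 𝓑'
    exact Submodule.mem_sup_right ⟨ψ, hψ⟩
  let fbar := Submodule.liftQ _ _ hkerf
  let gbar := Submodule.liftQ _ _ hkerg
  let Pbar := fbar.coprod gbar
  have hP : ∀ (η : ↥(LinearMap.ker d')) (ξ : ↥(LinearMap.ker δ)),
      Pbar (Submodule.Quotient.mk η, Submodule.Quotient.mk ξ) =
        Submodule.Quotient.mk ⟨(ξ : B') - Q (η : B), hmem η ξ⟩ := by
    intro η ξ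
    rw [show Pbar (Submodule.Quotient.mk η, Submodule.Quotient.mk ξ) =
        fbar (Submodule.Quotient.mk η) + gbar (Submodule.Quotient.mk ξ) from rfl,
      Submodule.liftQ_apply, Submodule.liftQ_apply, LinearMap.comp_apply, LinearMap.comp_apply,
      Submodule.mkQ_apply, Submodule.mkQ_apply, ← Submodule.Quotient.mk_add]
    congr 1
    apply Subtype.ext
    show -(Q (η : B)) + (ξ : B') = (ξ : B') - Q (η : B)
    abel
  refine ⟨ha, hb, hQ, hmem, Ibar, Pbar, hI, hP, hIinj, ?_, ?_⟩
  · -- surjectivity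
    intro y
    obtain ⟨x, rfl⟩ := Submodule.Quotient.mk_surjective _ y
    obtain ⟨x, hx⟩ := x
    obtain ⟨-, ⟨η, hη, rfl⟩, hQη⟩ := hx
    have hξ : x - Q η ∈ LinearMap.ker δ := by
      simp [LinearMap.mem_ker, map_sub, hQη]
    refine ⟨(Submodule.Quotient.mk ⟨-η, neg_mem hη⟩, Submodule.Quotient.mk ⟨x - Q η, hξ⟩), ?_⟩
    rw [hP]
    congr 1
    apply Subtype.ext
    show (x - Q η) - Q (-η) = x
    simp
  · -- ker = range
    apply le_antisymm
    · rintro ⟨y1, y2⟩ hy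
      obtain ⟨η, rfl⟩ := Submodule.Quotient.mk_surjective _ y1
      obtain ⟨ξ, rfl⟩ := Submodule.Quotient.mk_surjective _ y2
      rw [LinearMap.mem_ker, hP, Submodule.Quotient.mk_eq_zero] at hy
      have hy' : (ξ : B') - Q (η : B) ∈ 𝓑' := hy
      rw [h𝓑'def, Submodule.mem_sup] at hy'
      obtain ⟨a, ⟨φ, rfl⟩, b, ⟨ψ, rfl⟩, hab⟩ := hy'
      have hw : (η : B) + d φ ∈ ℋ := by
        constructor
        · have := η.2
          simp only [LinearMap.mem_ker] at this ⊢
          simp [map_add, this, hdd' φ]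
        · show δ (Q ((η : B) + d φ)) = 0
          have hξ2 : δ (ξ : B') = 0 := ξ.2
          have hQw : Q ((η : B) + d φ) = (ξ : B') - δ' ψ := by
            have h' : (Q ∘ₗ d) φ = Q (d φ) := rfl
            rw [h'] at hab
            rw [map_add]
            linear_combination (norm := module) hab
          rw [hQw, map_sub, hξ2, hδδ' ψ, sub_zero]
      refine ⟨Submodule.Quotient.mk ⟨(η : B) + d φ, hw⟩, ?_⟩
      rw [hI]
      ext : 1
      · show Submodule.Quotient.mk _ = Submodule.Quotient.mk η
        rw [Submodule.Quotient.eq]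
        show (Submodule.inclusion (inf_le_left : ℋ ≤ LinearMap.ker d') ⟨(η:B) + d φ, hw⟩ - η : ↥(LinearMap.ker d')) ∈ _
        refine ⟨φ, ?_⟩
        show d φ = ((Submodule.inclusion (inf_le_left : ℋ ≤ LinearMap.ker d') ⟨(η:B) + d φ, hw⟩ : ↥(LinearMap.ker d')) : B) - (η : B)
        simp [Submodule.coe_inclusion]
      · show Submodule.Quotient.mk _ = Submodule.Quotient.mk ξ
        rw [Submodule.Quotient.eq]
        refine ⟨-ψ, ?_⟩
        show δ' (-ψ) = ((LinearMap.restrict Q hQ ⟨(η:B) + d φ, hw⟩ : ↥(LinearMap.ker δ)) : B') - (ξ : B')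
        have hres : ((LinearMap.restrict Q hQ ⟨(η:B) + d φ, hw⟩ : ↥(LinearMap.ker δ)) : B')
            = Q ((η : B) + d φ) := rfl
        have : (Q ∘ₗ d) φ = Q (d φ) := rfl
        rw [this] at hab
        rw [hres, map_add, map_neg]
        linear_combination (norm := module) -hab
    · rintro y ⟨z, rfl⟩
      obtain ⟨w, rfl⟩ := Submodule.Quotient.mk_surjective _ z
      rw [LinearMap.mem_ker, hI, hP, Submodule.Quotient.mk_eq_zero]
      have : ((LinearMap.restrict Q hQ w : ↥(LinearMap.ker δ)) : B') -
          Q ((Submodule.inclusion (inf_le_left : ℋ ≤ LinearMap.ker d') w : ↥(LinearMap.ker d')) : B) = 0 := by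
        show Q (w : B) - Q (w : B) = 0
        simp
      show (⟨_, _⟩ : ↥ℋ') ∈ _
      convert Submodule.zero_mem ((𝓑').comap ℋ'.subtype) using 1
      exact Subtype.ext this
end

section
/- Let A, B, C, A', B', C' be real vector spaces and let d : A → B, d' : B → C, Q : B → B', δ : B' → A', δ' : C' → B' be linear maps with d' ∘ d = 0 and δ ∘ δ' = 0; define ℋ := {w ∈ B : d' w = 0 and δ(Q w) = 0}, 𝓑 := range(d) ⊓ Q⁻¹(range δ'), ℋ' := {ξ ∈ B' : δ ξ = δ(Q η) for some η ∈ ker d'}, and 𝓑' := (Q ∘ d)(A) + range δ'. Suppose given bilinear pairings ⟨·,·⟩_A : A × A' → ℝ, ⟨·,·⟩_B : B × B' → ℝ, ⟨·,·⟩_C : C × C' → ℝ satisfying ⟨d φ, ξ⟩_B = ⟨φ, δ ξ⟩_A for all φ ∈ A, ξ ∈ B'; ⟨w, δ' ρ⟩_B = ⟨d' w, ρ⟩_C for all w ∈ B, ρ ∈ C'; and ⟨v, Q w⟩_B = ⟨w, Q v⟩_B for all v, w ∈ B. Then ⟨v, ξ⟩_B = 0 whenever v ∈ 𝓑 and ξ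 ∈ ℋ', and ⟨w, ξ⟩_B = 0 whenever w ∈ ℋ and ξ ∈ 𝓑'. Consequently ⟨·,·⟩_B descends to a well-defined bilinear pairing (ℋ ⧸ 𝓑) × (ℋ' ⧸ 𝓑') → ℝ. -/
/-!
Both orthogonality relations come from moving operators across the pairing. For `v = d φ` with
`Q v = δ' ρ`, and `ξ` with `δ ξ = δ (Q η)`, `d' η = 0`:
`⟨d φ, ξ⟩ = ⟨φ, δ (Q η)⟩ = ⟨d φ, Q η⟩ = ⟨η, Q (d φ)⟩ = ⟨η, δ' ρ⟩ = ⟨d' η, ρ⟩ = 0`.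
For `w` with `d' w = 0`, `δ (Q w) = 0`: `⟨w, Q (d φ)⟩ = ⟨d φ, Q w⟩ = ⟨φ, δ (Q w)⟩ = 0` and
`⟨w, δ' ρ⟩ = ⟨d' w, ρ⟩ = 0`. A pairing of `H × H'` that kills `K × H'` and `H × K'` then lifts
to the subquotients by `LinearMap.liftQ₂`.
-/

namespace LinearMap

variable {R M N P : Type*} [CommRing R] [AddCommGroup M] [Module R M] [AddCommGroup N]
  [Module R N] [AddCommGroup P] [Module R P]

theorem exists_subquotient_pairing (f : M →ₗ[R] N →ₗ[R] P) (H K : Submodule R M)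
    (H' K' : Submodule R N) (hK : ∀ m ∈ K, ∀ n ∈ H', f m n = 0)
    (hK' : ∀ m ∈ H, ∀ n ∈ K', f m n = 0) :
    ∃ g : (H ⧸ K.comap H.subtype) →ₗ[R] (H' ⧸ K'.comap H'.subtype) →ₗ[R] P,
      ∀ (m : H) (n : H'), g (Submodule.Quotient.mk m) (Submodule.Quotient.mk n) = f m n :=
  ⟨(f.compl₁₂ H.subtype H'.subtype).liftQ₂ _ _
      (fun m hm ↦ LinearMap.ext fun n ↦ hK m hm n n.2)
      (fun n hn ↦ LinearMap.ext fun m ↦ hK' m m.2 n hn),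
    fun _ _ ↦ rfl⟩

end LinearMap

section Pairing

variable {A B C A' B' C' : Type*}
  [AddCommGroup A] [Module ℝ A] [AddCommGroup B] [Module ℝ B]
  [AddCommGroup C] [Module ℝ C] [AddCommGroup A'] [Module ℝ A']
  [AddCommGroup B'] [Module ℝ B'] [AddCommGroup C'] [Module ℝ C']
  {d : A →ₗ[ℝ] B} {d' : B →ₗ[ℝ] C} {Q : B →ₗ[ℝ] B'} {δ : B' →ₗ[ℝ] A'} {δ' : C' →ₗ[ℝ] B'}
  {pA : A →ₗ[ℝ] A' →ₗ[ℝ] ℝ} {pB : B →ₗ[ℝ] B' →ₗ[ℝ] ℝ} {pC : C →ₗ[ℝ] C' →ₗ[ℝ] ℝ}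

theorem pairing_range_inf_comap_eq_zero
    (hadj₁ : ∀ (φ : A) (ξ : B'), pB (d φ) ξ = pA φ (δ ξ))
    (hadj₂ : ∀ (w : B) (ρ : C'), pB w (δ' ρ) = pC (d' w) ρ)
    (hQsym : ∀ v w : B, pB v (Q w) = pB w (Q v)) :
    ∀ v ∈ LinearMap.range d ⊓ Submodule.comap Q (LinearMap.range δ'),
      ∀ ξ ∈ Submodule.comap δ (Submodule.map δ (Submodule.map Q (LinearMap.ker d'))),
        pB v ξ = 0 := by
  rintro _ ⟨⟨φ, rfl⟩, ρ, hρ⟩ ξ ⟨-, ⟨η, hη, rfl⟩, hδξ⟩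
  calc pB (d φ) ξ = pA φ (δ ξ) := hadj₁ φ ξ
    _ = pB (d φ) (Q η) := by rw [← hδξ, hadj₁]
    _ = pB η (δ' ρ) := by rw [hQsym, hρ]
    _ = 0 := by rw [hadj₂, LinearMap.mem_ker.mp hη, map_zero, LinearMap.zero_apply]

theorem pairing_ker_inf_ker_eq_zero
    (hadj₁ : ∀ (φ : A) (ξ : B'), pB (d φ) ξ = pA φ (δ ξ))
    (hadj₂ : ∀ (w : B) (ρ : C'), pB w (δ' ρ) = pC (d' w) ρ)
    (hQsym : ∀ v w : B, pB v (Q w) = pB w (Q v)) :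
    ∀ w ∈ LinearMap.ker d' ⊓ LinearMap.ker (δ ∘ₗ Q),
      ∀ ξ ∈ LinearMap.range (Q ∘ₗ d) ⊔ LinearMap.range δ', pB w ξ = 0 := by
  rintro w ⟨hd'w, hδQw⟩ ξ hξ
  obtain ⟨_, ⟨φ, rfl⟩, _, ⟨ρ, rfl⟩, rfl⟩ := Submodule.mem_sup.mp hξ
  have hQd : pB w (Q (d φ)) = 0 := by
    rw [← hQsym, hadj₁, show δ (Q w) = 0 from hδQw, map_zero]
  have hδ' : pB w (δ' ρ) = 0 := by
    rw [hadj₂, show d' w = 0 from hd'w, map_zero, LinearMap.zero_apply]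
  rw [map_add, LinearMap.comp_apply, hQd, hδ', add_zero]

end Pairing

theorem stmt_8_general
    {A B C A' B' C' : Type*}
    [AddCommGroup A] [Module ℝ A] [AddCommGroup B] [Module ℝ B]
    [AddCommGroup C] [Module ℝ C] [AddCommGroup A'] [Module ℝ A']
    [AddCommGroup B'] [Module ℝ B'] [AddCommGroup C'] [Module ℝ C']
    (d : A →ₗ[ℝ] B) (d' : B →ₗ[ℝ] C) (Q : B →ₗ[ℝ] B')
    (δ : B' →ₗ[ℝ] A') (δ' : C' →ₗ[ℝ] B')
    (pA : A →ₗ[ℝ] A' →ₗ[ℝ] ℝ) (pB : B →ₗ[ℝ] B' →ₗ[ℝ] ℝ) (pC : C →ₗ[ℝ] C' →ₗ[ℝ] ℝ)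
    (hadj₁ : ∀ (φ : A) (ξ : B'), pB (d φ) ξ = pA φ (δ ξ))
    (hadj₂ : ∀ (w : B) (ρ : C'), pB w (δ' ρ) = pC (d' w) ρ)
    (hQsym : ∀ v w : B, pB v (Q w) = pB w (Q v)) :
    (∀ v ∈ LinearMap.range d ⊓ Submodule.comap Q (LinearMap.range δ'),
      ∀ ξ ∈ Submodule.comap δ (Submodule.map δ (Submodule.map Q (LinearMap.ker d'))),
        pB v ξ = 0) ∧
    (∀ w ∈ LinearMap.ker d' ⊓ LinearMap.ker (δ ∘ₗ Q),
      ∀ ξ ∈ LinearMap.range (Q ∘ₗ d) ⊔ LinearMap.range δ',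
        pB w ξ = 0) ∧
    ∃ Bbar : (↥(LinearMap.ker d' ⊓ LinearMap.ker (δ ∘ₗ Q)) ⧸
          (LinearMap.range d ⊓ Submodule.comap Q (LinearMap.range δ')).comap
            (LinearMap.ker d' ⊓ LinearMap.ker (δ ∘ₗ Q)).subtype) →ₗ[ℝ]
        (↥(Submodule.comap δ (Submodule.map δ (Submodule.map Q (LinearMap.ker d')))) ⧸
          (LinearMap.range (Q ∘ₗ d) ⊔ LinearMap.range δ').comap
            (Submodule.comap δ
              (Submodule.map δ (Submodule.map Q (LinearMap.ker d')))).subtype) →ₗ[ℝ] ℝ,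
      ∀ (w : ↥(LinearMap.ker d' ⊓ LinearMap.ker (δ ∘ₗ Q)))
        (ξ : ↥(Submodule.comap δ
                (Submodule.map δ (Submodule.map Q (LinearMap.ker d'))))),
        Bbar (Submodule.Quotient.mk w) (Submodule.Quotient.mk ξ) = pB (w : B) (ξ : B') := by
  have h𝓑 := pairing_range_inf_comap_eq_zero hadj₁ hadj₂ hQsym
  have hℋ := pairing_ker_inf_ker_eq_zero hadj₁ hadj₂ hQsym
  exact ⟨h𝓑, hℋ, pB.exists_subquotient_pairing _ _ _ _ h𝓑 hℋ⟩

/-- Descent part of Theorem 2.11 of Branson–Gover: in a fixed conformal scale,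
the pairing between `B` (modelling `E^k`) and `B'` (modelling `E_k`) vanishes
on `𝓑 × ℋ'` and on `ℋ × 𝓑'`, and hence descends to a pairing
`(ℋ ⧸ 𝓑) × (ℋ' ⧸ 𝓑') → ℝ`. -/
theorem stmt_8
    {A B C A' B' C' : Type*}
    [AddCommGroup A] [Module ℝ A] [AddCommGroup B] [Module ℝ B]
    [AddCommGroup C] [Module ℝ C] [AddCommGroup A'] [Module ℝ A']
    [AddCommGroup B'] [Module ℝ B'] [AddCommGroup C'] [Module ℝ C']
    (d : A →ₗ[ℝ] B) (d' : B →ₗ[ℝ] C) (Q : B →ₗ[ℝ] B')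
    (δ : B' →ₗ[ℝ] A') (δ' : C' →ₗ[ℝ] B')
    (hdd : d' ∘ₗ d = 0) (hδδ : δ ∘ₗ δ' = 0)
    (pA : A →ₗ[ℝ] A' →ₗ[ℝ] ℝ) (pB : B →ₗ[ℝ] B' →ₗ[ℝ] ℝ) (pC : C →ₗ[ℝ] C' →ₗ[ℝ] ℝ)
    (hadj₁ : ∀ (φ : A) (ξ : B'), pB (d φ) ξ = pA φ (δ ξ))
    (hadj₂ : ∀ (w : B) (ρ : C'), pB w (δ' ρ) = pC (d' w) ρ)
    (hQsym : ∀ v w : B, pB v (Q w) = pB w (Q v)) :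
    (∀ v ∈ LinearMap.range d ⊓ Submodule.comap Q (LinearMap.range δ'),
      ∀ ξ ∈ Submodule.comap δ (Submodule.map δ (Submodule.map Q (LinearMap.ker d'))),
        pB v ξ = 0) ∧
    (∀ w ∈ LinearMap.ker d' ⊓ LinearMap.ker (δ ∘ₗ Q),
      ∀ ξ ∈ LinearMap.range (Q ∘ₗ d) ⊔ LinearMap.range δ',
        pB w ξ = 0) ∧
    ∃ Bbar : (↥(LinearMap.ker d' ⊓ LinearMap.ker (δ ∘ₗ Q)) ⧸
          (LinearMap.range d ⊓ Submodule.comap Q (LinearMap.range δ')).comap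
            (LinearMap.ker d' ⊓ LinearMap.ker (δ ∘ₗ Q)).subtype) →ₗ[ℝ]
        (↥(Submodule.comap δ (Submodule.map δ (Submodule.map Q (LinearMap.ker d')))) ⧸
          (LinearMap.range (Q ∘ₗ d) ⊔ LinearMap.range δ').comap
            (Submodule.comap δ
              (Submodule.map δ (Submodule.map Q (LinearMap.ker d')))).subtype) →ₗ[ℝ] ℝ,
      ∀ (w : ↥(LinearMap.ker d' ⊓ LinearMap.ker (δ ∘ₗ Q)))
        (ξ : ↥(Submodule.comap δ
                (Submodule.map δ (Submodule.map Q (LinearMap.ker d'))))),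
        Bbar (Submodule.Quotient.mk w) (Submodule.Quotient.mk ξ) = pB (w : B) (ξ : B') :=
  stmt_8_general d d' Q δ δ' pA pB pC hadj₁ hadj₂ hQsym
end

section
/- Let A be an associative unital ℝ-algebra, n a real number, and Δ, Q, N elements of A satisfying Δ·Q − Q·Δ = −2·(2N + (n+2)·1) and N·Δ − Δ·N = −2·Δ. Then: (i) for every natural number m ≥ 1, Δ^m·Q − Q·Δ^m = −2m • Δ^{m−1}·(2N + (n + 4 − 2m)·1); (ii) if M is a module over A (compatible with the ℝ-action) and u ∈ M satisfies N·u = (m − 2 − n/2)•u, then Δ^m·(Q·u) = Q·(Δ^m·u). -/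
/-! Writing `X = 2N + (n+2)`, the relation `[N, Δ] = -2Δ` says that `Δ` lowers the eigenvalue of
`N` by `2`, so `X Δ = Δ (X - 4)`. Expanding `[Δ^(k+1), Q] = Δ^k [Δ, Q] + [Δ^k, Q] Δ` and moving
each `X` to the right of the powers of `Δ` gives `[Δ^m, Q] = -2m Δ^(m-1) (X + 2 - 2m)` by induction.
On a vector of weight `m - 2 - n/2` the factor `X + 2 - 2m = 2N + (n + 4 - 2m)` vanishes. -/

section Commutator

variable {R A : Type*} [CommRing R] [Ring A] [Algebra R A]

theorem pow_succ_mul_sub_mul_pow_succ (a b : A) (k : ℕ) :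
    a ^ (k + 1) * b - b * a ^ (k + 1) = a ^ k * (a * b - b * a) + (a ^ k * b - b * a ^ k) * a := by
  rw [pow_succ]
  noncomm_ring

theorem pow_succ_mul_sub_mul_pow_succ_of_commutators (n : R) {Δ Q N : A}
    (h₁ : Δ * Q - Q * Δ = (-2 : R) • ((2 : R) • N + (n + 2) • (1 : A)))
    (h₂ : N * Δ - Δ * N = (-2 : R) • Δ) (k : ℕ) :
    Δ ^ (k + 1) * Q - Q * Δ ^ (k + 1) =
      (-(2 * ((k : R) + 1))) • (Δ ^ k * ((2 : R) • N + (n + 2 - 2 * (k : R)) • (1 : A))) := by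
  have hNΔ : N * Δ = Δ * (N - (2 : R) • 1) := by
    rw [mul_sub, mul_smul_comm, mul_one]
    linear_combination (norm := module) h₂
  induction k with
  | zero => simpa using h₁.trans (by module)
  | succ k ih =>
    rw [pow_succ_mul_sub_mul_pow_succ, h₁, ih, pow_succ]
    simp only [mul_smul_comm, smul_mul_assoc, mul_add, add_mul, mul_sub, mul_assoc, hNΔ, mul_one]
    push_cast
    match_scalars <;> ring

theorem pow_mul_sub_mul_pow_of_commutators (n : R) {Δ Q N : A}
    (h₁ : Δ * Q - Q * Δ = (-2 : R) • ((2 : R) • N + (n + 2) • (1 : A)))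
    (h₂ : N * Δ - Δ * N = (-2 : R) • Δ) (m : ℕ) :
    Δ ^ m * Q - Q * Δ ^ m =
      (-(2 * (m : R))) • (Δ ^ (m - 1) * ((2 : R) • N + (n + 4 - 2 * (m : R)) • (1 : A))) := by
  cases m with
  -- the factor `2m` kills the truncated `m - 1`
  | zero => simp
  | succ k =>
    rw [pow_succ_mul_sub_mul_pow_succ_of_commutators n h₁ h₂ k, Nat.add_sub_cancel]
    push_cast
    ring_nf

end Commutator

theorem stmt_10_general
    {A : Type*} [Ring A] [Algebra ℝ A]
    (n : ℝ) (Δ Q N : A)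
    (h₁ : Δ * Q - Q * Δ = (-2 : ℝ) • ((2 : ℝ) • N + (n + 2) • (1 : A)))
    (h₂ : N * Δ - Δ * N = (-2 : ℝ) • Δ)
    (m : ℕ) :
    (Δ ^ m * Q - Q * Δ ^ m =
      (-(2 * (m : ℝ))) •
        (Δ ^ (m - 1) * ((2 : ℝ) • N + (n + 4 - 2 * (m : ℝ)) • (1 : A)))) ∧
    (∀ (M : Type*) [AddCommGroup M] [Module ℝ M] [Module A M]
        [IsScalarTower ℝ A M] (u : M),
      N • u = ((m : ℝ) - 2 - n / 2) • u →
      (Δ ^ m) • (Q • u) = Q • ((Δ ^ m) • u)) := by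
  have hcomm := pow_mul_sub_mul_pow_of_commutators n h₁ h₂ m
  refine ⟨hcomm, fun M _ _ _ _ u hu => ?_⟩
  have hX : ((2 : ℝ) • N + (n + 4 - 2 * (m : ℝ)) • (1 : A)) • u = 0 := by
    rw [add_smul, smul_assoc, smul_assoc, hu, one_smul, smul_smul, ← add_smul]
    exact smul_eq_zero_of_left (by ring) u
  rw [← sub_eq_zero, ← mul_smul, ← mul_smul, ← sub_smul, hcomm, smul_assoc, mul_smul, hX,
    smul_zero, smul_zero]

/-- Algebraic content of Proposition 3.1 of Branson–Gover: from the relations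
`[Δ,Q] = −2(2N + (n+2))` and `[N,Δ] = −2Δ` one gets, for `m ≥ 1`,
`[Δ^m, Q] = −2m Δ^{m−1}(2N + (n+4−2m))`, and hence `Δ^m` commutes with `Q` on
any module vector of weight `m − 2 − n/2` (tangentiality of `Δ̃^m`). -/
theorem stmt_10
    {A : Type*} [Ring A] [Algebra ℝ A]
    (n : ℝ) (Δ Q N : A)
    (h₁ : Δ * Q - Q * Δ = (-2 : ℝ) • ((2 : ℝ) • N + (n + 2) • (1 : A)))
    (h₂ : N * Δ - Δ * N = (-2 : ℝ) • Δ)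
    (m : ℕ) (hm : 1 ≤ m) :
    (Δ ^ m * Q - Q * Δ ^ m =
      (-(2 * (m : ℝ))) •
        (Δ ^ (m - 1) * ((2 : ℝ) • N + (n + 4 - 2 * (m : ℝ)) • (1 : A)))) ∧
    (∀ (M : Type*) [AddCommGroup M] [Module ℝ M] [Module A M]
        [IsScalarTower ℝ A M] (u : M),
      N • u = ((m : ℝ) - 2 - n / 2) • u →
      (Δ ^ m) • (Q • u) = Q • ((Δ ^ m) • u)) :=
  stmt_10_general n Δ Q N h₁ h₂ m
end

section
/- Let A be an associative unital ℝ-algebra, n a real number, and d, δ, x, y, Δ, Q, N elements of A satisfying Q·d − d·Q = −2x, Q·δ − δ·Q = 2y, Q·x = x·Q, Q·y = y·Q, N·Q − Q·N = 2Q, and Q·Δ − Δ·Q = 2·(2N + (n+2)·1). Define εD := d·(n·1 + 2N − 2·1) + x·Δ and ιD := −δ·(n·1 + 2N − 2·1) + y·Δ. Then Q·εD − εD·Q = −4·Q·d and Q·ιD − ιD·Q = 4·Q·δ; equivalently, εD·Q = Q·(εD + 4d) and ιD·Q = Q·(ιD − 4δ), so that in any A-module M the operators εD and ιD map the subset Q·M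 into itself. -/
/-!
Write `P = n + 2N − 2` for the shifted weight operator. Since `[Q, N] = −2Q`, one has
`[Q, P] = −4Q`, and `[Q, Δ] = 2(P + 4)`. By the Leibniz rule,
`[Q, dP + xΔ] = −2xP − 4dQ + 2xP + 8x = −4(dQ − 2x) = −4Qd`: the `Q`-commutator of `ε(𝔻)`
is a left multiple of `Q`, so `ε(𝔻)` preserves `Q·M`. The operator `ι(𝔻)` is `ε(𝔻)` with
`(d, x)` replaced by `(−δ, y)`, which satisfy the same relations.
-/

/-- The operator `ε(𝔻) = d̃(n + 2∇_𝕏 − 2) + ε(𝕏)Δ̃` of Branson–Gover, modelled in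
an abstract associative `ℝ`-algebra. -/
def epsD {A : Type*} [Ring A] [Algebra ℝ A] (n : ℝ) (d x Δ N : A) : A :=
  d * (n • (1 : A) + (2 : ℝ) • N - (2 : ℝ) • (1 : A)) + x * Δ

/-- The operator `ι(𝔻) = −δ̃(n + 2∇_𝕏 − 2) + ι(𝕏)Δ̃` of Branson–Gover, modelled in
an abstract associative `ℝ`-algebra. -/
def iotaD {A : Type*} [Ring A] [Algebra ℝ A] (n : ℝ) (δ y Δ N : A) : A :=
  -(δ * (n • (1 : A) + (2 : ℝ) • N - (2 : ℝ) • (1 : A))) + y * Δ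

section BransonGover

variable {A : Type*} [Ring A] [Algebra ℝ A]

def shiftedWeight (n : ℝ) (N : A) : A :=
  n • (1 : A) + (2 : ℝ) • N - (2 : ℝ) • (1 : A)

theorem iotaD_eq_epsD_neg (n : ℝ) (δ y Δ N : A) :
    iotaD n δ y Δ N = epsD n (-δ) y Δ N := by
  rw [iotaD, epsD, neg_mul]

theorem commutator_shiftedWeight (n : ℝ) {Q N : A} (h : N * Q - Q * N = (2 : ℝ) • Q) :
    Q * shiftedWeight n N - shiftedWeight n N * Q = -((4 : ℝ) • Q) := by
  unfold shiftedWeight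
  linear_combination (norm := (noncomm_ring; module)) -((2 : ℝ) • h)

theorem commutator_epsD (n : ℝ) {d x Δ Q N : A}
    (hd : Q * d - d * Q = -((2 : ℝ) • x))
    (hx : Q * x = x * Q)
    (hN : N * Q - Q * N = (2 : ℝ) • Q)
    (hΔ : Q * Δ - Δ * Q = (2 : ℝ) • ((2 : ℝ) • N + (n + 2) • (1 : A))) :
    Q * epsD n d x Δ N - epsD n d x Δ N * Q = -((4 : ℝ) • (Q * d)) := by
  have hP := commutator_shiftedWeight n hN
  unfold shiftedWeight at hP
  unfold epsD
  linear_combination (norm := (noncomm_ring; module))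
    hd * (n • (1 : A) + (2 : ℝ) • N - (2 : ℝ) • (1 : A)) + d * hP + hx * Δ + x * hΔ
      + (4 : ℝ) • hd

end BransonGover

theorem mul_eq_mul_add_of_commutator_eq_neg {R : Type*} [Ring R] {a b Q : R}
    (h : Q * a - a * Q = -(Q * b)) : a * Q = Q * (a + b) := by
  linear_combination (norm := noncomm_ring) -h

theorem smul_smul_eq_smul_smul_of_mul_eq_mul {R M : Type*} [Ring R] [AddCommGroup M]
    [Module R M] {a b Q : R} (h : a * Q = Q * b) (m : M) : a • Q • m = Q • b • m := by
  rw [← mul_smul, h, mul_smul]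

/-- Algebraic content of Proposition 3.2 of Branson–Gover: `ε(𝔻)` and `ι(𝔻)`
act tangentially along `𝒬`, via `[Q, ε(𝔻)] = −4 Q d̃` and `[Q, ι(𝔻)] = 4 Q δ̃`;
equivalently `ε(𝔻) Q = Q(ε(𝔻) + 4d̃)` and `ι(𝔻) Q = Q(ι(𝔻) − 4δ̃)`, so that in
any module the operators `ε(𝔻)`, `ι(𝔻)` preserve the subset `Q·M`. -/
theorem stmt_11
    {A : Type*} [Ring A] [Algebra ℝ A]
    (n : ℝ) (d δ x y Δ Q N : A)
    (h₁ : Q * d - d * Q = -((2 : ℝ) • x))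
    (h₂ : Q * δ - δ * Q = (2 : ℝ) • y)
    (h₃ : Q * x = x * Q)
    (h₄ : Q * y = y * Q)
    (h₅ : N * Q - Q * N = (2 : ℝ) • Q)
    (h₆ : Q * Δ - Δ * Q = (2 : ℝ) • ((2 : ℝ) • N + (n + 2) • (1 : A))) :
    Q * epsD n d x Δ N - epsD n d x Δ N * Q = -((4 : ℝ) • (Q * d)) ∧
    Q * iotaD n δ y Δ N - iotaD n δ y Δ N * Q = (4 : ℝ) • (Q * δ) ∧
    epsD n d x Δ N * Q = Q * (epsD n d x Δ N + (4 : ℝ) • d) ∧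
    iotaD n δ y Δ N * Q = Q * (iotaD n δ y Δ N - (4 : ℝ) • δ) ∧
    (∀ (M : Type*) [AddCommGroup M] [Module A M] (m : M),
      (∃ m' : M, epsD n d x Δ N • (Q • m) = Q • m') ∧
      (∃ m'' : M, iotaD n δ y Δ N • (Q • m) = Q • m'')) := by
  have hε := commutator_epsD n h₁ h₃ h₅ h₆
  have hι : Q * iotaD n δ y Δ N - iotaD n δ y Δ N * Q = (4 : ℝ) • (Q * δ) := by
    have hδ : Q * -δ - -δ * Q = -((2 : ℝ) • y) := by rw [← h₂]; noncomm_ring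
    simpa [iotaD_eq_epsD_neg] using commutator_epsD n hδ h₄ h₅ h₆
  have hεQ : epsD n d x Δ N * Q = Q * (epsD n d x Δ N + (4 : ℝ) • d) :=
    mul_eq_mul_add_of_commutator_eq_neg (by rwa [mul_smul_comm])
  have hιQ : iotaD n δ y Δ N * Q = Q * (iotaD n δ y Δ N - (4 : ℝ) • δ) := by
    rw [sub_eq_add_neg]
    exact mul_eq_mul_add_of_commutator_eq_neg (by rw [mul_neg, mul_smul_comm, neg_neg, hι])
  exact ⟨hε, hι, hεQ, hιQ, fun M _ _ m =>
    ⟨⟨_, smul_smul_eq_smul_smul_of_mul_eq_mul hεQ m⟩,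
      ⟨_, smul_smul_eq_smul_smul_of_mul_eq_mul hιQ m⟩⟩⟩
end

section
/- Let A be an associative unital ℝ-algebra, n a real number, and d, δ, x, y, Δ, Q, N elements of A satisfying: d·d = 0, δ·δ = 0, x·x = 0, y·y = 0, d·x + x·d = 0, δ·y + y·δ = 0, d·δ + δ·d = Δ, x·y + y·x = Q, (d·y + y·d) − (δ·x + x·δ) = 2N + (n+2)·1, Δ·d = d·Δ, Δ·δ = δ·Δ, Δ·x − x·Δ = −2d, Δ·y − y·Δ = 2δ, N·d − d·N = −d, N·δ − δ·N = −δ, N·x − x·N = x, N·y − y·N = y, and N·Δ − Δ·N = −2Δ. Define εD := d·(n·1 + 2N − 2·1) + x·Δ and ιD := −δ·(n·1 + 2N − 2·1) + y·Δ. Then εD·εD = 0, ιD·ιD = 0, and ιD·εD + εD·ιD = Q·Δ². -/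
section

variable {A : Type*} [Ring A] [Algebra ℝ A]

def weightFactor (n : ℝ) (N : A) : A :=
  n • (1 : A) + (2 : ℝ) • N - (2 : ℝ) • (1 : A)

theorem epsD_eq (n : ℝ) (d x Δ N : A) : epsD n d x Δ N = d * weightFactor n N + x * Δ :=
  rfl

theorem weightFactor_mul_of_commutator (n : ℝ) {N a : A} {k : ℝ}
    (h : N * a - a * N = k • a) :
    weightFactor n N * a = a * weightFactor n N + (2 * k) • a := by
  rw [weightFactor]
  linear_combination (norm := (noncomm_ring; try module)) (2 : ℝ) • h

theorem epsD_mul_self_eq_zero (n : ℝ) {d x Δ N : A}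
    (hdd : d * d = 0) (hxx : x * x = 0) (hdx : d * x + x * d = 0) (hΔd : Δ * d = d * Δ)
    (hΔx : Δ * x - x * Δ = -((2 : ℝ) • d))
    (hNd : N * d - d * N = -d) (hNx : N * x - x * N = x)
    (hNΔ : N * Δ - Δ * N = -((2 : ℝ) • Δ)) :
    epsD n d x Δ N * epsD n d x Δ N = 0 := by
  set M := weightFactor n N
  have hMd : M * d = d * M + (2 * -1 : ℝ) • d :=
    weightFactor_mul_of_commutator n (hNd.trans (neg_one_smul ℝ d).symm)
  have hMx : M * x = x * M + (2 * 1 : ℝ) • x :=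
    weightFactor_mul_of_commutator n (hNx.trans (one_smul ℝ x).symm)
  have hMΔ : M * Δ = Δ * M + (2 * -2 : ℝ) • Δ :=
    weightFactor_mul_of_commutator n (hNΔ.trans (neg_smul (2 : ℝ) Δ).symm)
  have hdMdM : d * M * (d * M) = 0 := by
    linear_combination (norm := (noncomm_ring; try module)) d * hMd * M + hdd * (M * M)
      - (2 : ℝ) • (hdd * M)
  have hcross : d * M * (x * Δ) + x * Δ * (d * M) = -((2 : ℝ) • (d * x * Δ)) := by
    linear_combination (norm := (noncomm_ring; try module)) d * hMx * Δ + x * hΔd * M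
      - x * d * hMΔ + hdx * (M * Δ) + (4 : ℝ) • (hdx * Δ)
  have hxΔxΔ : x * Δ * (x * Δ) = (2 : ℝ) • (d * x * Δ) := by
    linear_combination (norm := (noncomm_ring; try module)) x * hΔx * Δ + hxx * (Δ * Δ)
      - (2 : ℝ) • (hdx * Δ)
  rw [epsD_eq]
  linear_combination (norm := noncomm_ring) hdMdM + hcross + hxΔxΔ

theorem iotaD_mul_self_eq_zero (n : ℝ) {δ y Δ N : A}
    (hδδ : δ * δ = 0) (hyy : y * y = 0) (hδy : δ * y + y * δ = 0) (hΔδ : Δ * δ = δ * Δ)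
    (hΔy : Δ * y - y * Δ = (2 : ℝ) • δ)
    (hNδ : N * δ - δ * N = -δ) (hNy : N * y - y * N = y)
    (hNΔ : N * Δ - Δ * N = -((2 : ℝ) • Δ)) :
    iotaD n δ y Δ N * iotaD n δ y Δ N = 0 := by
  rw [iotaD_eq_epsD_neg]
  refine epsD_mul_self_eq_zero n ?_ hyy ?_ ?_ ?_ ?_ hNy hNΔ
  · rwa [neg_mul_neg]
  · rw [neg_mul, mul_neg, ← neg_add, hδy, neg_zero]
  · rw [mul_neg, neg_mul, hΔδ]
  · rw [hΔy, smul_neg, neg_neg]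
  · rw [mul_neg, neg_mul, sub_neg_eq_add, neg_add_eq_sub, ← neg_sub, hNδ]

theorem iotaD_mul_epsD_add_epsD_mul_iotaD (n : ℝ) {d δ x y Δ Q N : A}
    (hdδ : d * δ + δ * d = Δ) (hxy : x * y + y * x = Q)
    (hweight : (d * y + y * d) - (δ * x + x * δ) = (2 : ℝ) • N + (n + 2) • (1 : A))
    (hΔd : Δ * d = d * Δ) (hΔδ : Δ * δ = δ * Δ)
    (hΔx : Δ * x - x * Δ = -((2 : ℝ) • d)) (hΔy : Δ * y - y * Δ = (2 : ℝ) • δ)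
    (hNd : N * d - d * N = -d) (hNδ : N * δ - δ * N = -δ)
    (hNx : N * x - x * N = x) (hNy : N * y - y * N = y)
    (hNΔ : N * Δ - Δ * N = -((2 : ℝ) • Δ)) :
    iotaD n δ y Δ N * epsD n d x Δ N + epsD n d x Δ N * iotaD n δ y Δ N = Q * Δ ^ 2 := by
  set M := weightFactor n N
  have hMd : M * d = d * M + (2 * -1 : ℝ) • d :=
    weightFactor_mul_of_commutator n (hNd.trans (neg_one_smul ℝ d).symm)
  have hMδ : M * δ = δ * M + (2 * -1 : ℝ) • δ :=
    weightFactor_mul_of_commutator n (hNδ.trans (neg_one_smul ℝ δ).symm)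
  have hMx : M * x = x * M + (2 * 1 : ℝ) • x :=
    weightFactor_mul_of_commutator n (hNx.trans (one_smul ℝ x).symm)
  have hMy : M * y = y * M + (2 * 1 : ℝ) • y :=
    weightFactor_mul_of_commutator n (hNy.trans (one_smul ℝ y).symm)
  have hMΔ : M * Δ = Δ * M + (2 * -2 : ℝ) • Δ :=
    weightFactor_mul_of_commutator n (hNΔ.trans (neg_smul (2 : ℝ) Δ).symm)
  have hweight' : (d * y + y * d) - (δ * x + x * δ) = M + (4 : ℝ) • (1 : A) := by
    rw [hweight]
    simp only [M, weightFactor]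
    module
  have hexpand : iotaD n δ y Δ N * epsD n d x Δ N + epsD n d x Δ N * iotaD n δ y Δ N =
      -((d * δ + δ * d) * (M - (2 : ℝ) • 1) * M)
        + ((d * y + y * d) - (δ * x + x * δ)) * (M + (2 : ℝ) • 1) * Δ
        + (x * y + y * x) * Δ ^ 2 := by
    rw [iotaD_eq_epsD_neg, epsD_eq, epsD_eq]
    linear_combination (norm := (noncomm_ring; try module))
      -(δ * hMd * M) - δ * hMx * Δ + y * hΔd * M - y * d * hMΔ + y * hΔx * Δ
        - d * hMδ * M + d * hMy * Δ - x * hΔδ * M + x * δ * hMΔ + x * hΔy * Δ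
  have hΔMM : Δ * (M - (2 : ℝ) • 1) * M = (M + (4 : ℝ) • 1) * (M + (2 : ℝ) • 1) * Δ := by
    linear_combination (norm := (noncomm_ring; try module))
      -(hMΔ * M) - (M + (2 : ℝ) • 1) * hMΔ
  rw [hexpand, hdδ, hxy, hweight', hΔMM]
  abel

end

/-- Proposition 3.3 of Branson–Gover: from the (anti)commutation relations of
Tables 1–2 one has `ι(𝔻)ι(𝔻) = 0`, `ε(𝔻)ε(𝔻) = 0`, and
`ι(𝔻)ε(𝔻) + ε(𝔻)ι(𝔻) = Q Δ̃²`. -/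
theorem stmt_12
    {A : Type*} [Ring A] [Algebra ℝ A]
    (n : ℝ) (d δ x y Δ Q N : A)
    (h₁ : d * d = 0) (h₂ : δ * δ = 0) (h₃ : x * x = 0) (h₄ : y * y = 0)
    (h₅ : d * x + x * d = 0) (h₆ : δ * y + y * δ = 0)
    (h₇ : d * δ + δ * d = Δ) (h₈ : x * y + y * x = Q)
    (h₉ : (d * y + y * d) - (δ * x + x * δ) =
      (2 : ℝ) • N + (n + 2) • (1 : A))
    (h₁₀ : Δ * d = d * Δ) (h₁₁ : Δ * δ = δ * Δ)
    (h₁₂ : Δ * x - x * Δ = -((2 : ℝ) • d))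
    (h₁₃ : Δ * y - y * Δ = (2 : ℝ) • δ)
    (h₁₄ : N * d - d * N = -d) (h₁₅ : N * δ - δ * N = -δ)
    (h₁₆ : N * x - x * N = x) (h₁₇ : N * y - y * N = y)
    (h₁₈ : N * Δ - Δ * N = -((2 : ℝ) • Δ)) :
    epsD n d x Δ N * epsD n d x Δ N = 0 ∧
    iotaD n δ y Δ N * iotaD n δ y Δ N = 0 ∧
    iotaD n δ y Δ N * epsD n d x Δ N + epsD n d x Δ N * iotaD n δ y Δ N =
      Q * Δ ^ 2 :=
  ⟨epsD_mul_self_eq_zero n h₁ h₃ h₅ h₁₀ h₁₂ h₁₄ h₁₆ h₁₈,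
    iotaD_mul_self_eq_zero n h₂ h₄ h₆ h₁₁ h₁₃ h₁₅ h₁₇ h₁₈,
    iotaD_mul_epsD_add_epsD_mul_iotaD n h₇ h₈ h₉ h₁₀ h₁₁ h₁₂ h₁₃ h₁₄ h₁₅ h₁₆ h₁₇ h₁₈⟩
end
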